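/- If a bipartite state ρ can be transformed into σ by an LOSR map, then for every nonlocal game G the optimal expected payoff achievable with ρ is at least that achievable with σ: ℘*(ρ;G) ≥ ℘*(σ;G). -/

import Mathlib

open Matrix BigOperators
open scoped Kronecker ComplexOrder

noncomputable section

namespace QNL

/-- A density matrix: positive semidefinite with unit trace. -/
def IsDensity {n : Type*} [Fintype n] (ρ : Matrix n n ℂ) : Prop :=
  ρ.PosSemidef ∧ ρ.trace = 1

/-- A POVM with outcomes in `Fin k`: PSD elements summing to the identity. -/
def IsPOVM {n : Type*} [Fintype n] [DecidableEq n] {k : Type*} [Fintype k]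
    (P : k → Matrix n n ℂ) : Prop :=
  (∀ x, (P x).PosSemidef) ∧ ∑ x, P x = 1

/-- A probability distribution on `Fin k`. -/
def IsProbDist {k : ℕ} (ν : Fin k → ℝ) : Prop :=
  (∀ i, 0 ≤ ν i) ∧ ∑ i, ν i = 1

/-- A completely positive trace-preserving map, via a Kraus representation. -/
def IsCPTP {n m : ℕ}
    (Φ : Matrix (Fin n) (Fin n) ℂ → Matrix (Fin m) (Fin m) ℂ) : Prop :=
  ∃ (r : ℕ) (K : Fin r → Matrix (Fin m) (Fin n) ℂ),
    (∀ X, Φ X = ∑ i, K i * X * (K i)ᴴ) ∧ ∑ i, (K i)ᴴ * K i = 1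

/-- The tensor product `E ⊗ F` of two (linear) maps on matrix spaces, given
entrywise via matrix units. -/
def mapKron {a b a' b' : ℕ}
    (E : Matrix (Fin a) (Fin a) ℂ → Matrix (Fin a') (Fin a') ℂ)
    (F : Matrix (Fin b) (Fin b) ℂ → Matrix (Fin b') (Fin b') ℂ)
    (X : Matrix (Fin a × Fin b) (Fin a × Fin b) ℂ) :
    Matrix (Fin a' × Fin b') (Fin a' × Fin b') ℂ :=
  Matrix.of fun p q => ∑ i : Fin a, ∑ j : Fin a, ∑ k : Fin b, ∑ l : Fin b,
    X (i, k) (j, l) * E (Matrix.single i j 1) p.1 q.1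
      * F (Matrix.single k l 1) p.2 q.2

/-- Local operations and shared randomness: a convex mixture of products of
local CPTP maps. -/
def IsLOSR {a b a' b' : ℕ}
    (Φ : Matrix (Fin a × Fin b) (Fin a × Fin b) ℂ →
      Matrix (Fin a' × Fin b') (Fin a' × Fin b') ℂ) : Prop :=
  ∃ (k : ℕ) (ν : Fin k → ℝ)
    (E : Fin k → Matrix (Fin a) (Fin a) ℂ → Matrix (Fin a') (Fin a') ℂ)
    (F : Fin k → Matrix (Fin b) (Fin b) ℂ → Matrix (Fin b') (Fin b') ℂ),
    IsProbDist ν ∧ (∀ i, IsCPTP (E i)) ∧ (∀ i, IsCPTP (F i)) ∧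
    ∀ X, Φ X = ∑ i, (ν i : ℂ) • mapKron (E i) (F i) X

/-- A separable bipartite state: a finite convex combination of product
density matrices. -/
def IsSeparable {a b : ℕ}
    (σ : Matrix (Fin a × Fin b) (Fin a × Fin b) ℂ) : Prop :=
  ∃ (k : ℕ) (ν : Fin k → ℝ)
    (γ : Fin k → Matrix (Fin a) (Fin a) ℂ)
    (χ : Fin k → Matrix (Fin b) (Fin b) ℂ),
    IsProbDist ν ∧ (∀ i, IsDensity (γ i)) ∧ (∀ i, IsDensity (χ i)) ∧
    σ = ∑ i, (ν i : ℂ) • (γ i ⊗ₖ χ i)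

/-- A semi-quantum nonlocal game. -/
structure SQGame (nS nT nX nY a0 b0 : ℕ) where
  p : Fin nS → ℝ
  q : Fin nT → ℝ
  τ : Fin nS → Matrix (Fin a0) (Fin a0) ℂ
  ω : Fin nT → Matrix (Fin b0) (Fin b0) ℂ
  payoff : Fin nS → Fin nT → Fin nX → Fin nY → ℝ
  hp : IsProbDist p
  hq : IsProbDist q
  hτ : ∀ s, IsDensity (τ s)
  hω : ∀ t, IsDensity (ω t)

/-- The state `τ ⊗ ρ ⊗ ω` on `A₀ ⊗ (A ⊗ B) ⊗ B₀`, written entrywise. -/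
def questionState {a0 a b b0 : ℕ}
    (τ : Matrix (Fin a0) (Fin a0) ℂ)
    (ρ : Matrix (Fin a × Fin b) (Fin a × Fin b) ℂ)
    (ω : Matrix (Fin b0) (Fin b0) ℂ) :
    Matrix (Fin a0 × (Fin a × Fin b) × Fin b0)
      (Fin a0 × (Fin a × Fin b) × Fin b0) ℂ :=
  Matrix.of fun x y => τ x.1 y.1 * ρ x.2.1 y.2.1 * ω x.2.2 y.2.2

/-- The operator `P ⊗ Q` acting on `(A₀A) ⊗ (BB₀)`, arranged on
`A₀ ⊗ (A ⊗ B) ⊗ B₀`, written entrywise. -/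
def localOp {a0 a b b0 : ℕ}
    (P : Matrix (Fin a0 × Fin a) (Fin a0 × Fin a) ℂ)
    (Q : Matrix (Fin b × Fin b0) (Fin b × Fin b0) ℂ) :
    Matrix (Fin a0 × (Fin a × Fin b) × Fin b0)
      (Fin a0 × (Fin a × Fin b) × Fin b0) ℂ :=
  Matrix.of fun x y =>
    P (x.1, x.2.1.1) (y.1, y.2.1.1) * Q (x.2.1.2, x.2.2) (y.2.1.2, y.2.2)

/-- The expected payoff of a state `ρ` in the game `G` with local
measurement strategies `P`, `Q`. -/
def expPayoff {nS nT nX nY a0 b0 a b : ℕ} (G : SQGame nS nT nX nY a0 b0)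
    (ρ : Matrix (Fin a × Fin b) (Fin a × Fin b) ℂ)
    (P : Fin nX → Matrix (Fin a0 × Fin a) (Fin a0 × Fin a) ℂ)
    (Q : Fin nY → Matrix (Fin b × Fin b0) (Fin b × Fin b0) ℂ) : ℝ :=
  ∑ s, ∑ t, ∑ x, ∑ y, G.p s * G.q t * G.payoff s t x y *
    ((localOp (P x) (Q y) * questionState (G.τ s) ρ (G.ω t)).trace).re

/-- The optimal expected payoff `℘*(ρ; G)`. -/
def optPayoff {nS nT nX nY a0 b0 a b : ℕ}
    (G : SQGame nS nT nX nY a0 b0)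
    (ρ : Matrix (Fin a × Fin b) (Fin a × Fin b) ℂ) : ℝ :=
  sSup { r | ∃ (P : Fin nX → Matrix (Fin a0 × Fin a) (Fin a0 × Fin a) ℂ)
      (Q : Fin nY → Matrix (Fin b × Fin b0) (Fin b × Fin b0) ℂ),
      IsPOVM P ∧ IsPOVM Q ∧ r = expPayoff G ρ P Q }

/-- Membership in the convex hull of product POVMs `Co{M(A₀A;X) ⊗ M(BB₀;Y)}`. -/
def InCoHull {nX nY a0 b0 a b : ℕ}
    (Z : Fin nX → Fin nY →
      Matrix (Fin a0 × (Fin a × Fin b) × Fin b0)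
        (Fin a0 × (Fin a × Fin b) × Fin b0) ℂ) : Prop :=
  ∃ (k : ℕ) (ν : Fin k → ℝ)
    (P : Fin k → Fin nX → Matrix (Fin a0 × Fin a) (Fin a0 × Fin a) ℂ)
    (Q : Fin k → Fin nY → Matrix (Fin b × Fin b0) (Fin b × Fin b0) ℂ),
    IsProbDist ν ∧ (∀ i, IsPOVM (P i)) ∧ (∀ i, IsPOVM (Q i)) ∧
    ∀ x y, Z x y = ∑ i, (ν i : ℂ) • localOp (P i x) (Q i y)

/-- The set of question-answer probability distributions achievable with the
state `ρ` and (subnormalized) question ensembles `τ`, `ω`. -/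
def distSet {nS nT nX nY a0 b0 a b : ℕ}
    (ρ : Matrix (Fin a × Fin b) (Fin a × Fin b) ℂ)
    (τ : Fin nS → Matrix (Fin a0) (Fin a0) ℂ)
    (ω : Fin nT → Matrix (Fin b0) (Fin b0) ℂ) :
    Set (Fin nS × Fin nT × Fin nX × Fin nY → ℝ) :=
  { μ | ∃ Z, InCoHull Z ∧ ∀ s t x y,
      μ (s, t, x, y) = ((Z x y * questionState (τ s) ρ (ω t)).trace).re }

/-!
Write `σ = ∑ᵢ νᵢ (Eᵢ ⊗ Fᵢ)(ρ)`. The expected payoff is affine in the state, so it suffices to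
bound the payoff of one product channel `(E ⊗ F)(ρ)`. Passing to the Heisenberg picture, measuring
the POVMs `P`, `Q` on `τ ⊗ (E ⊗ F)(ρ) ⊗ ω` gives the same statistics as measuring
`(id ⊗ E)†(P)` and `(F ⊗ id)†(Q)` on `τ ⊗ ρ ⊗ ω`; since `E` and `F` are trace preserving these
are again POVMs, so every payoff reachable from `σ` is an average of payoffs reachable from `ρ`.
-/

section MatrixFacts

variable {ι l m n p α : Type*} [Fintype ι] [CommSemiring α]

lemma _root_.Matrix.kronecker_sum (A : Matrix l m α) (B : ι → Matrix n p α) :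
    A ⊗ₖ ∑ i, B i = ∑ i, A ⊗ₖ B i :=
  map_sum (kroneckerBilinear (R := α) A) B _

lemma _root_.Matrix.sum_kronecker (A : ι → Matrix l m α) (B : Matrix n p α) :
    (∑ i, A i) ⊗ₖ B = ∑ i, A i ⊗ₖ B :=
  map_sum ((kroneckerBilinear (R := α)).flip B) A _

end MatrixFacts

lemma _root_.Matrix.mul_single_one_mul_conjTranspose_apply {m n : Type*} [Fintype n]
    [DecidableEq n] (K : Matrix m n ℂ) (i j : n) (p q : m) :
    (K * single i j (1 : ℂ) * Kᴴ) p q = K p i * star (K q j) := by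
  simp [mul_apply, single_apply, ite_and]

lemma _root_.Matrix.PosSemidef.re_trace_mul_nonneg {n : Type*} [Fintype n] [DecidableEq n]
    {M N : Matrix n n ℂ} (hM : M.PosSemidef) (hN : N.PosSemidef) : 0 ≤ (M * N).trace.re := by
  open scoped MatrixOrder in
  obtain ⟨B, rfl⟩ := CStarAlgebra.nonneg_iff_eq_star_mul_self.mp hN.nonneg
  rw [star_eq_conjTranspose, ← Matrix.mul_assoc, trace_mul_comm, ← Matrix.mul_assoc]
  exact (Complex.nonneg_iff.mp (hM.mul_mul_conjTranspose_same B).trace_nonneg).1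

lemma IsProbDist.sum_mul_le {k : ℕ} {ν : Fin k → ℝ} (hν : IsProbDist ν) {f : Fin k → ℝ} {c : ℝ}
    (h : ∀ i, f i ≤ c) : ∑ i, ν i * f i ≤ c :=
  calc ∑ i, ν i * f i ≤ ∑ i, ν i * c :=
        Finset.sum_le_sum fun i _ => mul_le_mul_of_nonneg_left (h i) (hν.1 i)
    _ = c := by rw [← Finset.sum_mul, hν.2, one_mul]

lemma isPOVM_pi_single {n k : Type*} [Fintype n] [DecidableEq n] [Fintype k] [DecidableEq k]
    (i : k) : IsPOVM (Pi.single i (1 : Matrix n n ℂ)) := by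
  refine ⟨fun x => ?_, Finset.sum_pi_single' i 1 _ |>.trans (if_pos (Finset.mem_univ i))⟩
  rcases eq_or_ne x i with rfl | hx
  · simpa using PosSemidef.one
  · simpa [hx] using PosSemidef.zero

section Kraus

variable {ι l m n : Type*} [Fintype ι] [Fintype l] [Fintype m]

/-- The dual (Heisenberg-picture) map of the channel with Kraus operators `K`. -/
def krausDual (K : ι → Matrix m n ℂ) (X : Matrix m m ℂ) : Matrix n n ℂ :=
  ∑ i, (K i)ᴴ * X * K i

lemma IsPOVM.krausDual [Fintype n] [DecidableEq m] [DecidableEq n] {k : Type*} [Fintype k]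
    {P : k → Matrix m m ℂ} (hP : IsPOVM P) {K : ι → Matrix m n ℂ}
    (hK : ∑ i, (K i)ᴴ * K i = 1) : IsPOVM fun x => krausDual K (P x) := by
  refine ⟨fun x => posSemidef_sum _ fun i _ => (hP.1 x).conjTranspose_mul_mul_same (K i), ?_⟩
  simp only [QNL.krausDual]
  rw [Finset.sum_comm]
  simp only [← Matrix.sum_mul, ← Matrix.mul_sum, hP.2, Matrix.mul_one, hK]

variable [DecidableEq l] [DecidableEq n]

lemma sum_one_kronecker_conjTranspose_mul {K : ι → Matrix m n ℂ}
    (hK : ∑ i, (K i)ᴴ * K i = 1) :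
    ∑ i, ((1 : Matrix l l ℂ) ⊗ₖ K i)ᴴ * ((1 : Matrix l l ℂ) ⊗ₖ K i) = 1 := by
  simp only [conjTranspose_kronecker, conjTranspose_one, ← mul_kronecker_mul, Matrix.one_mul,
    ← kronecker_sum, hK, one_kronecker_one]

lemma sum_kronecker_one_conjTranspose_mul {K : ι → Matrix m n ℂ}
    (hK : ∑ i, (K i)ᴴ * K i = 1) :
    ∑ i, (K i ⊗ₖ (1 : Matrix l l ℂ))ᴴ * (K i ⊗ₖ (1 : Matrix l l ℂ)) = 1 := by
  simp only [conjTranspose_kronecker, conjTranspose_one, ← mul_kronecker_mul, Matrix.one_mul,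
    ← sum_kronecker, hK, one_kronecker_one]

end Kraus

def regroup (α β γ δ : Type*) : α × (β × γ) × δ ≃ (α × β) × (γ × δ) where
  toFun x := ((x.1, x.2.1.1), (x.2.1.2, x.2.2))
  invFun y := (y.1.1, (y.1.2, y.2.1), y.2.2)
  left_inv _ := rfl
  right_inv _ := rfl

section Algebra

variable {a0 a b b0 : ℕ}

lemma localOp_eq_submatrix (P : Matrix (Fin a0 × Fin a) (Fin a0 × Fin a) ℂ)
    (Q : Matrix (Fin b × Fin b0) (Fin b × Fin b0) ℂ) :
    localOp P Q = (P ⊗ₖ Q).submatrix (regroup _ _ _ _) (regroup _ _ _ _) :=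
  rfl

lemma questionState_eq_kronecker (τ : Matrix (Fin a0) (Fin a0) ℂ)
    (ρ : Matrix (Fin a × Fin b) (Fin a × Fin b) ℂ) (ω : Matrix (Fin b0) (Fin b0) ℂ) :
    questionState τ ρ ω = τ ⊗ₖ (ρ ⊗ₖ ω) := by
  ext x y
  simp [questionState, mul_assoc]

lemma localOp_sum {ι κ : Type*} (s : Finset ι) (t : Finset κ)
    (P : ι → Matrix (Fin a0 × Fin a) (Fin a0 × Fin a) ℂ)
    (Q : κ → Matrix (Fin b × Fin b0) (Fin b × Fin b0) ℂ) :
    localOp (∑ i ∈ s, P i) (∑ j ∈ t, Q j) = ∑ i ∈ s, ∑ j ∈ t, localOp (P i) (Q j) := by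
  ext x y
  simp only [localOp, of_apply, Matrix.sum_apply, Finset.sum_mul, Finset.mul_sum]
  exact Finset.sum_comm

lemma localOp_one :
    localOp (1 : Matrix (Fin a0 × Fin a) (Fin a0 × Fin a) ℂ)
      (1 : Matrix (Fin b × Fin b0) (Fin b × Fin b0) ℂ) = 1 := by
  rw [localOp_eq_submatrix, one_kronecker_one, submatrix_one_equiv]

lemma questionState_add (τ : Matrix (Fin a0) (Fin a0) ℂ)
    (ρ₁ ρ₂ : Matrix (Fin a × Fin b) (Fin a × Fin b) ℂ) (ω : Matrix (Fin b0) (Fin b0) ℂ) :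
    questionState τ (ρ₁ + ρ₂) ω = questionState τ ρ₁ ω + questionState τ ρ₂ ω := by
  simp only [questionState_eq_kronecker, add_kronecker, kronecker_add]

lemma questionState_smul (τ : Matrix (Fin a0) (Fin a0) ℂ) (c : ℂ)
    (ρ : Matrix (Fin a × Fin b) (Fin a × Fin b) ℂ) (ω : Matrix (Fin b0) (Fin b0) ℂ) :
    questionState τ (c • ρ) ω = c • questionState τ ρ ω := by
  simp only [questionState_eq_kronecker, smul_kronecker, kronecker_smul]

lemma questionState_sum {ι : Type*} (s : Finset ι) (τ : Matrix (Fin a0) (Fin a0) ℂ)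
    (ρ : ι → Matrix (Fin a × Fin b) (Fin a × Fin b) ℂ) (ω : Matrix (Fin b0) (Fin b0) ℂ) :
    questionState τ (∑ i ∈ s, ρ i) ω = ∑ i ∈ s, questionState τ (ρ i) ω :=
  map_sum (AddMonoidHom.mk' (questionState τ · ω) (questionState_add τ · · ω)) ρ s

end Algebra

section Conjugation

variable {a0 a b b0 a' b' : ℕ}

lemma one_kronecker_kronecker_one_eq_submatrix (K : Matrix (Fin a') (Fin a) ℂ)
    (L : Matrix (Fin b') (Fin b) ℂ) :
    (1 : Matrix (Fin a0) (Fin a0) ℂ) ⊗ₖ ((K ⊗ₖ L) ⊗ₖ (1 : Matrix (Fin b0) (Fin b0) ℂ)) =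
      ((1 ⊗ₖ K) ⊗ₖ (L ⊗ₖ 1)).submatrix (regroup _ _ _ _) (regroup _ _ _ _) := by
  ext x y
  simp only [kroneckerMap_apply, submatrix_apply, regroup, Equiv.coe_fn_mk]
  ring

lemma conjTranspose_mul_localOp_mul (A : Matrix (Fin a0 × Fin a') (Fin a0 × Fin a) ℂ)
    (B : Matrix (Fin b' × Fin b0) (Fin b × Fin b0) ℂ)
    (P : Matrix (Fin a0 × Fin a') (Fin a0 × Fin a') ℂ)
    (Q : Matrix (Fin b' × Fin b0) (Fin b' × Fin b0) ℂ) :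
    ((A ⊗ₖ B).submatrix (regroup _ _ _ _) (regroup _ _ _ _))ᴴ * localOp P Q *
        (A ⊗ₖ B).submatrix (regroup _ _ _ _) (regroup _ _ _ _) =
      localOp (Aᴴ * P * A) (Bᴴ * Q * B) := by
  rw [localOp_eq_submatrix, localOp_eq_submatrix, conjTranspose_submatrix,
    submatrix_mul_equiv, submatrix_mul_equiv, conjTranspose_kronecker, mul_kronecker_mul,
    mul_kronecker_mul]

lemma questionState_conj (τ : Matrix (Fin a0) (Fin a0) ℂ)
    (M : Matrix (Fin a' × Fin b') (Fin a × Fin b) ℂ)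
    (ρ : Matrix (Fin a × Fin b) (Fin a × Fin b) ℂ) (ω : Matrix (Fin b0) (Fin b0) ℂ) :
    questionState τ (M * ρ * Mᴴ) ω =
      ((1 : Matrix (Fin a0) (Fin a0) ℂ) ⊗ₖ (M ⊗ₖ (1 : Matrix (Fin b0) (Fin b0) ℂ))) *
        questionState τ ρ ω *
        ((1 : Matrix (Fin a0) (Fin a0) ℂ) ⊗ₖ (M ⊗ₖ (1 : Matrix (Fin b0) (Fin b0) ℂ)))ᴴ := by
  simp only [questionState_eq_kronecker, conjTranspose_kronecker, conjTranspose_one,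
    ← mul_kronecker_mul, Matrix.one_mul, Matrix.mul_one]

lemma trace_localOp_mul_questionState_conj (P : Matrix (Fin a0 × Fin a') (Fin a0 × Fin a') ℂ)
    (Q : Matrix (Fin b' × Fin b0) (Fin b' × Fin b0) ℂ) (τ : Matrix (Fin a0) (Fin a0) ℂ)
    (K : Matrix (Fin a') (Fin a) ℂ) (L : Matrix (Fin b') (Fin b) ℂ)
    (ρ : Matrix (Fin a × Fin b) (Fin a × Fin b) ℂ) (ω : Matrix (Fin b0) (Fin b0) ℂ) :
    (localOp P Q * questionState τ ((K ⊗ₖ L) * ρ * (K ⊗ₖ L)ᴴ) ω).trace =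
      (localOp
          (((1 : Matrix (Fin a0) (Fin a0) ℂ) ⊗ₖ K)ᴴ * P * ((1 : Matrix (Fin a0) (Fin a0) ℂ) ⊗ₖ K))
          ((L ⊗ₖ (1 : Matrix (Fin b0) (Fin b0) ℂ))ᴴ * Q * (L ⊗ₖ (1 : Matrix (Fin b0) (Fin b0) ℂ))) *
        questionState τ ρ ω).trace := by
  rw [questionState_conj, one_kronecker_kronecker_one_eq_submatrix,
    ← conjTranspose_mul_localOp_mul]
  simp only [← Matrix.mul_assoc]
  rw [trace_mul_comm]
  simp only [Matrix.mul_assoc]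

end Conjugation

section MapKron

variable {a b a' b' : ℕ}

lemma mapKron_add_left (E₁ E₂ : Matrix (Fin a) (Fin a) ℂ → Matrix (Fin a') (Fin a') ℂ)
    (F : Matrix (Fin b) (Fin b) ℂ → Matrix (Fin b') (Fin b') ℂ)
    (ρ : Matrix (Fin a × Fin b) (Fin a × Fin b) ℂ) :
    mapKron (E₁ + E₂) F ρ = mapKron E₁ F ρ + mapKron E₂ F ρ := by
  ext p q
  simp only [mapKron, of_apply, Matrix.add_apply, Pi.add_apply, mul_add, add_mul,
    Finset.sum_add_distrib]

lemma mapKron_add_right (E : Matrix (Fin a) (Fin a) ℂ → Matrix (Fin a') (Fin a') ℂ)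
    (F₁ F₂ : Matrix (Fin b) (Fin b) ℂ → Matrix (Fin b') (Fin b') ℂ)
    (ρ : Matrix (Fin a × Fin b) (Fin a × Fin b) ℂ) :
    mapKron E (F₁ + F₂) ρ = mapKron E F₁ ρ + mapKron E F₂ ρ := by
  ext p q
  simp only [mapKron, of_apply, Matrix.add_apply, Pi.add_apply, mul_add, Finset.sum_add_distrib]

lemma mapKron_sum_left {ι : Type*} [Fintype ι]
    (E : ι → Matrix (Fin a) (Fin a) ℂ → Matrix (Fin a') (Fin a') ℂ)
    (F : Matrix (Fin b) (Fin b) ℂ → Matrix (Fin b') (Fin b') ℂ)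
    (ρ : Matrix (Fin a × Fin b) (Fin a × Fin b) ℂ) :
    mapKron (fun X => ∑ i, E i X) F ρ = ∑ i, mapKron (E i) F ρ := by
  rw [← Finset.sum_fn]
  exact map_sum (AddMonoidHom.mk' (mapKron · F ρ) (mapKron_add_left · · F ρ)) E _

lemma mapKron_sum_right {ι : Type*} [Fintype ι]
    (E : Matrix (Fin a) (Fin a) ℂ → Matrix (Fin a') (Fin a') ℂ)
    (F : ι → Matrix (Fin b) (Fin b) ℂ → Matrix (Fin b') (Fin b') ℂ)
    (ρ : Matrix (Fin a × Fin b) (Fin a × Fin b) ℂ) :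
    mapKron E (fun X => ∑ i, F i X) ρ = ∑ i, mapKron E (F i) ρ := by
  rw [← Finset.sum_fn]
  exact map_sum (AddMonoidHom.mk' (mapKron E · ρ) (mapKron_add_right E · · ρ)) F _

lemma mul_single_one_mul_conjTranspose_apply {m n : Type*} [Fintype n] [DecidableEq n]
    (K : Matrix m n ℂ) (i j : n) (p q : m) :
    (K * single i j (1 : ℂ) * Kᴴ) p q = K p i * star (K q j) := by
  simp [mul_apply, single_apply, ite_and]

lemma mapKron_conj (K : Matrix (Fin a') (Fin a) ℂ) (L : Matrix (Fin b') (Fin b) ℂ)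
    (ρ : Matrix (Fin a × Fin b) (Fin a × Fin b) ℂ) :
    mapKron (fun X => K * X * Kᴴ) (fun X => L * X * Lᴴ) ρ = (K ⊗ₖ L) * ρ * (K ⊗ₖ L)ᴴ := by
  ext p q
  simp only [mapKron, of_apply, mul_single_one_mul_conjTranspose_apply]
  simp only [mul_apply, conjTranspose_apply, kroneckerMap_apply, Fintype.sum_prod_type,
    Finset.sum_mul]
  rw [Finset.sum_comm]
  refine Finset.sum_congr rfl fun j _ => ?_
  conv_rhs => rw [Finset.sum_comm]
  refine Finset.sum_congr rfl fun i _ => ?_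
  rw [Finset.sum_comm]
  refine Finset.sum_congr rfl fun l _ => Finset.sum_congr rfl fun k _ => ?_
  simp only [star_mul']
  ring

lemma mapKron_kraus {ι κ : Type*} [Fintype ι] [Fintype κ] (K : ι → Matrix (Fin a') (Fin a) ℂ)
    (L : κ → Matrix (Fin b') (Fin b) ℂ) (ρ : Matrix (Fin a × Fin b) (Fin a × Fin b) ℂ) :
    mapKron (fun X => ∑ i, K i * X * (K i)ᴴ) (fun X => ∑ j, L j * X * (L j)ᴴ) ρ =
      ∑ i, ∑ j, (K i ⊗ₖ L j) * ρ * (K i ⊗ₖ L j)ᴴ := by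
  rw [mapKron_sum_left]
  simp only [mapKron_sum_right, mapKron_conj]

end MapKron

section Heisenberg

variable {a b a' b' a0 b0 : ℕ} {ι κ : Type*} [Fintype ι] [Fintype κ]

lemma trace_localOp_mul_questionState_mapKron
    (P : Matrix (Fin a0 × Fin a') (Fin a0 × Fin a') ℂ)
    (Q : Matrix (Fin b' × Fin b0) (Fin b' × Fin b0) ℂ) (τ : Matrix (Fin a0) (Fin a0) ℂ)
    (K : ι → Matrix (Fin a') (Fin a) ℂ) (L : κ → Matrix (Fin b') (Fin b) ℂ)
    (ρ : Matrix (Fin a × Fin b) (Fin a × Fin b) ℂ) (ω : Matrix (Fin b0) (Fin b0) ℂ) :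
    (localOp P Q * questionState τ
        (mapKron (fun X => ∑ i, K i * X * (K i)ᴴ) (fun X => ∑ j, L j * X * (L j)ᴴ) ρ) ω).trace =
      (localOp (krausDual (fun i => (1 : Matrix (Fin a0) (Fin a0) ℂ) ⊗ₖ K i) P)
          (krausDual (fun j => L j ⊗ₖ (1 : Matrix (Fin b0) (Fin b0) ℂ)) Q) *
        questionState τ ρ ω).trace := by
  simp only [mapKron_kraus, questionState_sum, Matrix.mul_sum, trace_sum,
    trace_localOp_mul_questionState_conj, krausDual, localOp_sum, Matrix.sum_mul]

lemma expPayoff_mapKron {nS nT nX nY : ℕ} (G : SQGame nS nT nX nY a0 b0)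
    (K : ι → Matrix (Fin a') (Fin a) ℂ) (L : κ → Matrix (Fin b') (Fin b) ℂ)
    (ρ : Matrix (Fin a × Fin b) (Fin a × Fin b) ℂ)
    (P : Fin nX → Matrix (Fin a0 × Fin a') (Fin a0 × Fin a') ℂ)
    (Q : Fin nY → Matrix (Fin b' × Fin b0) (Fin b' × Fin b0) ℂ) :
    expPayoff G
        (mapKron (fun X => ∑ i, K i * X * (K i)ᴴ) (fun X => ∑ j, L j * X * (L j)ᴴ) ρ) P Q =
      expPayoff G ρ
        (fun x => krausDual (fun i => (1 : Matrix (Fin a0) (Fin a0) ℂ) ⊗ₖ K i) (P x))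
        (fun y => krausDual (fun j => L j ⊗ₖ (1 : Matrix (Fin b0) (Fin b0) ℂ)) (Q y)) := by
  simp only [expPayoff, trace_localOp_mul_questionState_mapKron]

end Heisenberg

section Answers

variable {nX nY a0 b0 a b : ℕ} {τ : Matrix (Fin a0) (Fin a0) ℂ}
  {ρ : Matrix (Fin a × Fin b) (Fin a × Fin b) ℂ} {ω : Matrix (Fin b0) (Fin b0) ℂ}

lemma re_trace_localOp_mul_questionState_nonneg
    {P : Matrix (Fin a0 × Fin a) (Fin a0 × Fin a) ℂ}
    {Q : Matrix (Fin b × Fin b0) (Fin b × Fin b0) ℂ}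
    (hP : P.PosSemidef) (hQ : Q.PosSemidef) (hτ : τ.PosSemidef) (hρ : ρ.PosSemidef)
    (hω : ω.PosSemidef) : 0 ≤ (localOp P Q * questionState τ ρ ω).trace.re := by
  rw [localOp_eq_submatrix, questionState_eq_kronecker]
  exact ((hP.kronecker hQ).submatrix _).re_trace_mul_nonneg (hτ.kronecker (hρ.kronecker hω))

lemma sum_re_trace_localOp_mul_questionState
    {P : Fin nX → Matrix (Fin a0 × Fin a) (Fin a0 × Fin a) ℂ}
    {Q : Fin nY → Matrix (Fin b × Fin b0) (Fin b × Fin b0) ℂ} (hP : IsPOVM P) (hQ : IsPOVM Q)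
    (hτ : τ.trace = 1) (hρ : ρ.trace = 1) (hω : ω.trace = 1) :
    ∑ x, ∑ y, (localOp (P x) (Q y) * questionState τ ρ ω).trace.re = 1 := by
  simp only [← Complex.re_sum, ← trace_sum, ← Matrix.sum_mul, ← localOp_sum, hP.2, hQ.2,
    localOp_one, Matrix.one_mul, questionState_eq_kronecker, trace_kronecker, hτ, hρ, hω,
    mul_one, Complex.one_re]

lemma re_trace_localOp_mul_questionState_le_one
    {P : Fin nX → Matrix (Fin a0 × Fin a) (Fin a0 × Fin a) ℂ}
    {Q : Fin nY → Matrix (Fin b × Fin b0) (Fin b × Fin b0) ℂ} (hP : IsPOVM P) (hQ : IsPOVM Q)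
    (hτ : IsDensity τ) (hρ : IsDensity ρ) (hω : IsDensity ω) (x : Fin nX) (y : Fin nY) :
    (localOp (P x) (Q y) * questionState τ ρ ω).trace.re ≤ 1 := by
  have h0 x y : 0 ≤ (localOp (P x) (Q y) * questionState τ ρ ω).trace.re :=
    re_trace_localOp_mul_questionState_nonneg (hP.1 x) (hQ.1 y) hτ.1 hρ.1 hω.1
  rw [← sum_re_trace_localOp_mul_questionState hP hQ hτ.2 hρ.2 hω.2]
  calc _ ≤ ∑ y', (localOp (P x) (Q y') * questionState τ ρ ω).trace.re :=
        Finset.single_le_sum (fun y' _ => h0 x y') (Finset.mem_univ y)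
    _ ≤ _ := Finset.single_le_sum (f := fun x' => ∑ y', _)
        (fun x' _ => Finset.sum_nonneg fun y' _ => h0 x' y') (Finset.mem_univ x)

end Answers

section Payoff

variable {nS nT nX nY a0 b0 a b : ℕ} (G : SQGame nS nT nX nY a0 b0)

lemma expPayoff_add (ρ₁ ρ₂ : Matrix (Fin a × Fin b) (Fin a × Fin b) ℂ)
    (P : Fin nX → Matrix (Fin a0 × Fin a) (Fin a0 × Fin a) ℂ)
    (Q : Fin nY → Matrix (Fin b × Fin b0) (Fin b × Fin b0) ℂ) :
    expPayoff G (ρ₁ + ρ₂) P Q = expPayoff G ρ₁ P Q + expPayoff G ρ₂ P Q := by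
  simp only [expPayoff, questionState_add, trace_add, Complex.add_re, mul_add,
    Finset.sum_add_distrib]

lemma expPayoff_ofReal_smul (c : ℝ) (ρ : Matrix (Fin a × Fin b) (Fin a × Fin b) ℂ)
    (P : Fin nX → Matrix (Fin a0 × Fin a) (Fin a0 × Fin a) ℂ)
    (Q : Fin nY → Matrix (Fin b × Fin b0) (Fin b × Fin b0) ℂ) :
    expPayoff G ((c : ℂ) • ρ) P Q = c * expPayoff G ρ P Q := by
  simp only [expPayoff, questionState_smul, Matrix.mul_smul, trace_smul, smul_eq_mul,
    Complex.re_ofReal_mul, Finset.mul_sum]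
  congr! 4 with s t x y
  ring

lemma expPayoff_sum_smul {k : ℕ} (ν : Fin k → ℝ)
    (ρ : Fin k → Matrix (Fin a × Fin b) (Fin a × Fin b) ℂ)
    (P : Fin nX → Matrix (Fin a0 × Fin a) (Fin a0 × Fin a) ℂ)
    (Q : Fin nY → Matrix (Fin b × Fin b0) (Fin b × Fin b0) ℂ) :
    expPayoff G (∑ i, (ν i : ℂ) • ρ i) P Q = ∑ i, ν i * expPayoff G (ρ i) P Q := by
  refine (map_sum (AddMonoidHom.mk' (expPayoff G · P Q) (expPayoff_add G · · P Q)) _ _).trans ?_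
  simp only [AddMonoidHom.mk'_apply, expPayoff_ofReal_smul]

lemma expPayoff_le_sum_abs {ρ : Matrix (Fin a × Fin b) (Fin a × Fin b) ℂ} (hρ : IsDensity ρ)
    {P : Fin nX → Matrix (Fin a0 × Fin a) (Fin a0 × Fin a) ℂ}
    {Q : Fin nY → Matrix (Fin b × Fin b0) (Fin b × Fin b0) ℂ} (hP : IsPOVM P) (hQ : IsPOVM Q) :
    expPayoff G ρ P Q ≤ ∑ s, ∑ t, ∑ x, ∑ y, |G.p s * G.q t * G.payoff s t x y| := by
  refine Finset.sum_le_sum fun s _ => Finset.sum_le_sum fun t _ =>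
    Finset.sum_le_sum fun x _ => Finset.sum_le_sum fun y _ => ?_
  have h0 := re_trace_localOp_mul_questionState_nonneg (hP.1 x) (hQ.1 y) (G.hτ s).1 hρ.1
    (G.hω t).1
  have h1 := re_trace_localOp_mul_questionState_le_one hP hQ (G.hτ s) hρ (G.hω t) x y
  calc _ ≤ |G.p s * G.q t * G.payoff s t x y| *
        (localOp (P x) (Q y) * questionState (G.τ s) ρ (G.ω t)).trace.re :=
        mul_le_mul_of_nonneg_right (le_abs_self _) h0
    _ ≤ _ := mul_le_of_le_one_right (abs_nonneg _) h1

lemma expPayoff_le_optPayoff {ρ : Matrix (Fin a × Fin b) (Fin a × Fin b) ℂ} (hρ : IsDensity ρ)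
    {P : Fin nX → Matrix (Fin a0 × Fin a) (Fin a0 × Fin a) ℂ}
    {Q : Fin nY → Matrix (Fin b × Fin b0) (Fin b × Fin b0) ℂ} (hP : IsPOVM P) (hQ : IsPOVM Q) :
    expPayoff G ρ P Q ≤ optPayoff G ρ := by
  refine le_csSup ⟨∑ s, ∑ t, ∑ x, ∑ y, |G.p s * G.q t * G.payoff s t x y|, ?_⟩
    ⟨P, Q, hP, hQ, rfl⟩
  rintro _ ⟨P, Q, hP, hQ, rfl⟩
  exact expPayoff_le_sum_abs G hρ hP hQ

lemma optPayoff_le (hX : 0 < nX) (hY : 0 < nY) {ρ : Matrix (Fin a × Fin b) (Fin a × Fin b) ℂ}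
    {c : ℝ} (h : ∀ P Q, IsPOVM P → IsPOVM Q → expPayoff G ρ P Q ≤ c) : optPayoff G ρ ≤ c := by
  refine csSup_le ⟨_, _, _, isPOVM_pi_single ⟨0, hX⟩, isPOVM_pi_single ⟨0, hY⟩, rfl⟩ ?_
  rintro _ ⟨P, Q, hP, hQ, rfl⟩
  exact h P Q hP hQ

lemma optPayoff_eq_zero (h : nX = 0 ∨ nY = 0) (ρ : Matrix (Fin a × Fin b) (Fin a × Fin b) ℂ) :
    optPayoff G ρ = 0 := by
  have h0 P Q : expPayoff G ρ P Q = 0 := by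
    rcases h with rfl | rfl <;> simp [expPayoff]
  refine le_antisymm (Real.sSup_nonpos ?_) (Real.sSup_nonneg ?_) <;>
    rintro _ ⟨P, Q, -, -, rfl⟩ <;> simp [h0]

variable {a' b' : ℕ}

lemma expPayoff_mapKron_le_optPayoff
    {E : Matrix (Fin a) (Fin a) ℂ → Matrix (Fin a') (Fin a') ℂ}
    {F : Matrix (Fin b) (Fin b) ℂ → Matrix (Fin b') (Fin b') ℂ} (hE : IsCPTP E) (hF : IsCPTP F)
    {ρ : Matrix (Fin a × Fin b) (Fin a × Fin b) ℂ} (hρ : IsDensity ρ)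
    {P : Fin nX → Matrix (Fin a0 × Fin a') (Fin a0 × Fin a') ℂ}
    {Q : Fin nY → Matrix (Fin b' × Fin b0) (Fin b' × Fin b0) ℂ} (hP : IsPOVM P) (hQ : IsPOVM Q) :
    expPayoff G (mapKron E F ρ) P Q ≤ optPayoff G ρ := by
  obtain ⟨r, K, hEK, hK⟩ := hE
  obtain ⟨r', L, hFL, hL⟩ := hF
  obtain rfl : E = _ := funext hEK
  obtain rfl : F = _ := funext hFL
  rw [expPayoff_mapKron]
  exact expPayoff_le_optPayoff G hρ (hP.krausDual (sum_one_kronecker_conjTranspose_mul hK))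
    (hQ.krausDual (sum_kronecker_one_conjTranspose_mul hL))

lemma IsLOSR.expPayoff_le_optPayoff
    {Φ : Matrix (Fin a × Fin b) (Fin a × Fin b) ℂ → Matrix (Fin a' × Fin b') (Fin a' × Fin b') ℂ}
    (hΦ : IsLOSR Φ) {ρ : Matrix (Fin a × Fin b) (Fin a × Fin b) ℂ} (hρ : IsDensity ρ)
    {P : Fin nX → Matrix (Fin a0 × Fin a') (Fin a0 × Fin a') ℂ}
    {Q : Fin nY → Matrix (Fin b' × Fin b0) (Fin b' × Fin b0) ℂ} (hP : IsPOVM P) (hQ : IsPOVM Q) :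
    expPayoff G (Φ ρ) P Q ≤ optPayoff G ρ := by
  obtain ⟨k, ν, E, F, hν, hE, hF, hΦ⟩ := hΦ
  rw [hΦ, expPayoff_sum_smul]
  exact hν.sum_mul_le fun i => expPayoff_mapKron_le_optPayoff G (hE i) (hF i) hρ hP hQ

end Payoff

/-- LOSR transformability implies payoff dominance in every
(semi-quantum) nonlocal game. -/
theorem losr_implies_payoff_dominance {a b a' b' : ℕ}
    (ρ : Matrix (Fin a × Fin b) (Fin a × Fin b) ℂ)
    (σ : Matrix (Fin a' × Fin b') (Fin a' × Fin b') ℂ)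
    (hρ : IsDensity ρ)
    (Φ : Matrix (Fin a × Fin b) (Fin a × Fin b) ℂ →
      Matrix (Fin a' × Fin b') (Fin a' × Fin b') ℂ)
    (hΦ : IsLOSR Φ) (hσ : Φ ρ = σ) :
    ∀ (nS nT nX nY a0 b0 : ℕ) (G : SQGame nS nT nX nY a0 b0),
      optPayoff G σ ≤ optPayoff G ρ := by
  intro nS nT nX nY a0 b0 G
  -- Without answers every payoff is an empty sum; both optima are `0`, possibly as `sSup ∅`.
  by_cases hXY : nX = 0 ∨ nY = 0
  · rw [optPayoff_eq_zero G hXY, optPayoff_eq_zero G hXY]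
  obtain ⟨hX, hY⟩ := not_or.mp hXY
  subst hσ
  exact optPayoff_le G (Nat.pos_of_ne_zero hX) (Nat.pos_of_ne_zero hY)
    fun P Q hP hQ => hΦ.expPayoff_le_optPayoff G hρ hP hQ

end QNL
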